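/- For a discrete random variable e with values in a finite set and any random variable z: min over conditional kernels D of E[−log D(e | z)] equals H(e) − I(e; z), where I(e; z) is the mutual information. Hence maximizing this minimum over encoders producing z is equivalent to minimizing I(e; z), and the supremum value H(e) is attained iff z is independent of e. -/

import Mathlib

/-!
Writing `q(e|z) = p(e,z) / p(z)` for the posterior, the cross-entropy of a kernel `D` exceeds
that of `q` by `∑_z p(z) KL(q(·|z) ‖ D(·|z)) ≥ 0` (Gibbs' inequality), so the posterior is the
optimal kernel, and its cross-entropy is `H(e|z) = H(e) - I(e;z)`. Finally `I(e;z)` is the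
Kullback–Leibler divergence of `p(e,z)` from `p(e) p(z)`, which vanishes exactly when the two
coincide.
-/

open Finset Real

theorem Real.mul_log_div_le_sub {p q : ℝ} (hp : 0 < p) (hq : 0 < q) :
    p * log (q / p) ≤ q - p := by
  calc p * log (q / p) ≤ p * (q / p - 1) :=
        mul_le_mul_of_nonneg_left (log_le_sub_one_of_pos (div_pos hq hp)) hp.le
    _ = q - p := by field_simp

theorem Real.mul_log_div_eq_sub_iff {p q : ℝ} (hp : 0 < p) (hq : 0 < q) :
    p * log (q / p) = q - p ↔ p = q := by
  refine ⟨fun h => ?_, fun h => by simp [h, hq.ne']⟩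
  by_contra hne
  have hlt : log (q / p) < q / p - 1 :=
    log_lt_sub_one_of_pos (div_pos hq hp) fun h1 =>
      hne ((div_eq_one_iff_eq hp.ne').mp h1).symm
  have : p * log (q / p) < q - p := by
    calc p * log (q / p) < p * (q / p - 1) := mul_lt_mul_of_pos_left hlt hp
      _ = q - p := by field_simp
  exact this.ne h

section Gibbs

variable {ι : Type*} {s : Finset ι} {p q : ι → ℝ}

theorem Finset.sum_mul_log_div_le (hp : ∀ i ∈ s, 0 < p i) (hq : ∀ i ∈ s, 0 < q i) :
    ∑ i ∈ s, p i * log (q i / p i) ≤ ∑ i ∈ s, q i - ∑ i ∈ s, p i := by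
  rw [← sum_sub_distrib]
  exact sum_le_sum fun i hi => mul_log_div_le_sub (hp i hi) (hq i hi)

theorem Finset.sum_mul_log_div_eq_iff (hp : ∀ i ∈ s, 0 < p i) (hq : ∀ i ∈ s, 0 < q i) :
    ∑ i ∈ s, p i * log (q i / p i) = ∑ i ∈ s, q i - ∑ i ∈ s, p i ↔ ∀ i ∈ s, p i = q i := by
  rw [← sum_sub_distrib,
    sum_eq_sum_iff_of_le fun i hi => mul_log_div_le_sub (hp i hi) (hq i hi)]
  exact forall₂_congr fun i hi => mul_log_div_eq_sub_iff (hp i hi) (hq i hi)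

end Gibbs

namespace FiniteJoint

variable {E Z : Type*}

section

variable [Fintype Z]

def fstMarginal (p : E → Z → ℝ) (e : E) : ℝ := ∑ z, p e z

theorem fstMarginal_pos {p : E → Z → ℝ} (hp : ∀ e z, 0 < p e z) (e : E) (z : Z) :
    0 < fstMarginal p e :=
  sum_pos (fun z' _ => hp e z') ⟨z, mem_univ z⟩

end

variable [Fintype E]

def sndMarginal (p : E → Z → ℝ) (z : Z) : ℝ := ∑ e, p e z

noncomputable def posterior (p : E → Z → ℝ) (z : Z) (e : E) : ℝ := p e z / sndMarginal p z

theorem sndMarginal_pos {p : E → Z → ℝ} (hp : ∀ e z, 0 < p e z) (e : E) (z : Z) :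
    0 < sndMarginal p z :=
  sum_pos (fun e' _ => hp e' z) ⟨e, mem_univ e⟩

theorem posterior_pos {p : E → Z → ℝ} (hp : ∀ e z, 0 < p e z) (z : Z) (e : E) :
    0 < posterior p z e :=
  div_pos (hp e z) (sndMarginal_pos hp e z)

theorem sum_posterior [Nonempty E] {p : E → Z → ℝ} (hp : ∀ e z, 0 < p e z) (z : Z) :
    ∑ e, posterior p z e = 1 := by
  obtain ⟨e⟩ := ‹Nonempty E›
  simp only [posterior, ← sum_div]
  exact div_self (sndMarginal_pos hp e z).ne'

variable [Fintype Z] (p : E → Z → ℝ)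

noncomputable section

def crossEntropy (D : Z → E → ℝ) : ℝ := ∑ z, ∑ e, p e z * -log (D z e)

def entropyFst : ℝ := -∑ e, fstMarginal p e * log (fstMarginal p e)

def mutualInfo : ℝ :=
  ∑ e, ∑ z, p e z * log (p e z / (fstMarginal p e * sndMarginal p z))

end

variable {p}

theorem crossEntropy_posterior (hp : ∀ e z, 0 < p e z) :
    crossEntropy p (posterior p) = entropyFst p - mutualInfo p := by
  have hlog : ∀ e z, p e z * -log (posterior p z e) = -(p e z * log (fstMarginal p e)) -
      p e z * log (p e z / (fstMarginal p e * sndMarginal p z)) := by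
    intro e z
    have hE := (fstMarginal_pos hp e z).ne'
    have hZ := (sndMarginal_pos hp e z).ne'
    rw [posterior, log_div (hp e z).ne' hZ, log_div (hp e z).ne' (mul_ne_zero hE hZ),
      log_mul hE hZ]
    ring
  rw [crossEntropy, sum_comm]
  simp only [hlog, sum_sub_distrib, sum_neg_distrib, ← sum_mul]
  rfl

theorem crossEntropy_posterior_le (hp : ∀ e z, 0 < p e z) {D : Z → E → ℝ}
    (hD : ∀ z e, 0 < D z e) (hD1 : ∀ z, ∑ e, D z e = 1) :
    crossEntropy p (posterior p) ≤ crossEntropy p D := by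
  have hterm : ∀ z e, p e z * log (D z e * sndMarginal p z / p e z) =
      p e z * -log (posterior p z e) - p e z * -log (D z e) := by
    intro z e
    have hZ := (sndMarginal_pos hp e z).ne'
    rw [posterior, log_div (mul_pos (hD z e) (sndMarginal_pos hp e z)).ne' (hp e z).ne',
      log_mul (hD z e).ne' hZ, log_div (hp e z).ne' hZ]
    ring
  have hgibbs : ∀ z, ∑ e, p e z * log (D z e * sndMarginal p z / p e z) ≤ 0 := fun z =>
    (sum_mul_log_div_le (fun e _ => hp e z)
      fun e _ => mul_pos (hD z e) (sndMarginal_pos hp e z)).trans_eq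
      (by rw [← sum_mul, hD1, one_mul, sub_eq_zero]; rfl)
  have hgap : crossEntropy p (posterior p) - crossEntropy p D =
      ∑ z, ∑ e, p e z * log (D z e * sndMarginal p z / p e z) := by
    simp only [crossEntropy, hterm, sum_sub_distrib]
  linarith [sum_nonpos fun z (_ : z ∈ univ) => hgibbs z]

theorem mutualInfo_eq_zero_iff (hp : ∀ e z, 0 < p e z) (hp1 : ∑ e, ∑ z, p e z = 1) :
    mutualInfo p = 0 ↔ ∀ e z, p e z = fstMarginal p e * sndMarginal p z := by
  set q : E × Z → ℝ := fun x => fstMarginal p x.1 * sndMarginal p x.2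
  have hq : ∀ x ∈ univ, 0 < q x := fun x _ =>
    mul_pos (fstMarginal_pos hp x.1 x.2) (sndMarginal_pos hp x.1 x.2)
  have hsum_q : ∑ x, q x = 1 := by
    rw [Fintype.sum_prod_type]
    simp only [q, ← mul_sum, ← sum_mul, fstMarginal, sndMarginal, hp1, one_mul]
    rw [sum_comm, hp1]
  have hsum_p : ∑ x : E × Z, p x.1 x.2 = 1 := by rw [Fintype.sum_prod_type]; exact hp1
  have hMI : mutualInfo p = -∑ x : E × Z, p x.1 x.2 * log (q x / p x.1 x.2) := by
    simp only [mutualInfo, Fintype.sum_prod_type, ← sum_neg_distrib, q]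
    refine sum_congr rfl fun e _ => sum_congr rfl fun z _ => ?_
    rw [← mul_neg, ← log_inv, inv_div]
  have hgibbs := sum_mul_log_div_eq_iff (fun x (_ : x ∈ univ) => hp x.1 x.2) hq
  rw [hsum_q, hsum_p, sub_self] at hgibbs
  rw [hMI, neg_eq_zero, hgibbs]
  simp only [mem_univ, forall_const, Prod.forall, q]

theorem isLeast_crossEntropy [Nonempty E] (hp : ∀ e z, 0 < p e z) :
    IsLeast {c | ∃ D : Z → E → ℝ, (∀ z e, 0 < D z e) ∧ (∀ z, ∑ e, D z e = 1) ∧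
      c = crossEntropy p D} (entropyFst p - mutualInfo p) := by
  rw [← crossEntropy_posterior hp]
  exact ⟨⟨posterior p, posterior_pos hp, sum_posterior hp, rfl⟩,
    fun c ⟨D, hD, hD1, hc⟩ => hc ▸ crossEntropy_posterior_le hp hD hD1⟩

end FiniteJoint

open Finset in
theorem stmt_5_general {E Z : Type*} [Fintype E] [Fintype Z] [Nonempty E]
    (p : E → Z → ℝ) (hp0 : ∀ e z, 0 < p e z) (hp1 : ∑ e, ∑ z, p e z = 1) :
    IsLeast
      {c : ℝ | ∃ D : Z → E → ℝ, (∀ z e, 0 < D z e) ∧ (∀ z, ∑ e, D z e = 1) ∧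
        c = ∑ z, ∑ e, p e z * (-Real.log (D z e))}
      ((-∑ e, (∑ z, p e z) * Real.log (∑ z, p e z)) -
        ∑ e, ∑ z, p e z *
          Real.log (p e z / ((∑ z', p e z') * (∑ e', p e' z)))) ∧
    (((-∑ e, (∑ z, p e z) * Real.log (∑ z, p e z)) -
        ∑ e, ∑ z, p e z *
          Real.log (p e z / ((∑ z', p e z') * (∑ e', p e' z)))) =
        (-∑ e, (∑ z, p e z) * Real.log (∑ z, p e z)) ↔
      ∀ e z, p e z = (∑ z', p e z') * (∑ e', p e' z)) := by
  exact ⟨FiniteJoint.isLeast_crossEntropy hp0,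
    sub_eq_self.trans (FiniteJoint.mutualInfo_eq_zero_iff hp0 hp1)⟩

open Finset in
/-- The minimum over conditional kernels `D` of the population cross-entropy
`E[-log D (e | z)]` equals `H(e) - I(e; z)`, and this minimum equals `H(e)`
iff `e` and `z` are independent. (Finite joint distribution `p` of `(e, z)`,
assumed strictly positive so that the Bayes-optimal kernel is admissible.) -/
theorem stmt_5 {E Z : Type*} [Fintype E] [Fintype Z] [Nonempty E] [Nonempty Z]
    (p : E → Z → ℝ) (hp0 : ∀ e z, 0 < p e z) (hp1 : ∑ e, ∑ z, p e z = 1) :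
    IsLeast
      {c : ℝ | ∃ D : Z → E → ℝ, (∀ z e, 0 < D z e) ∧ (∀ z, ∑ e, D z e = 1) ∧
        c = ∑ z, ∑ e, p e z * (-Real.log (D z e))}
      ((-∑ e, (∑ z, p e z) * Real.log (∑ z, p e z)) -
        ∑ e, ∑ z, p e z *
          Real.log (p e z / ((∑ z', p e z') * (∑ e', p e' z)))) ∧
    (((-∑ e, (∑ z, p e z) * Real.log (∑ z, p e z)) -
        ∑ e, ∑ z, p e z *
          Real.log (p e z / ((∑ z', p e z') * (∑ e', p e' z)))) =
        (-∑ e, (∑ z, p e z) * Real.log (∑ z, p e z)) ↔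
      ∀ e z, p e z = (∑ z', p e z') * (∑ e', p e' z)) :=
  stmt_5_general p hp0 hp1
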